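/- (Differential recursion for the Eulerian polynomials.) For every natural number n ≥ 0, in the polynomial ring ℚ[t]: A_{n+1}(t) = t·(1−t)·A_n'(t) + (n·t + 1)·A_n(t), where A_n'(t) is the formal derivative of A_n(t). -/

import Mathlib

open Polynomial

/-- Number of descents of a permutation of `Fin (m+1)`: indices `i ≤ m-1` with `σ i > σ (i+1)`. -/
def descentCount {m : ℕ} (σ : Equiv.Perm (Fin (m + 1))) : ℕ :=
  (Finset.univ.filter fun i : Fin m => σ i.succ < σ i.castSucc).card

/-- The Eulerian number `A(n,k)`: number of permutations of `Fin n` with exactly `k` descents. -/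
def eulerian (n k : ℕ) : ℕ :=
  match n with
  | 0 => if k = 0 then 1 else 0
  | m + 1 => Fintype.card {σ : Equiv.Perm (Fin (m + 1)) // descentCount σ = k}

/-- The Eulerian polynomial `A_n(t) = ∑_{k=0}^{n-1} A(n,k) t^k ∈ ℚ[t]`, with `A_0 = 1`. -/
noncomputable def eulerianPoly (n : ℕ) : Polynomial ℚ :=
  match n with
  | 0 => 1
  | m + 1 => ∑ k ∈ Finset.range (m + 1), C ((eulerian (m + 1) k : ℚ)) * X ^ k

open Equiv Finset

namespace EulerianAux

variable {m : ℕ}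

/-- Insert the maximum value at position `p`. -/
def ins (π : Perm (Fin (m + 1))) (p : Fin (m + 2)) : Perm (Fin (m + 2)) :=
  ((finSuccEquiv' p).trans (Equiv.optionCongr π)).trans (finSuccEquiv' (Fin.last (m + 1))).symm

lemma ins_self (π : Perm (Fin (m + 1))) (p : Fin (m + 2)) : ins π p p = Fin.last (m + 1) := by
  simp [ins, finSuccEquiv'_at, finSuccEquiv'_symm_none]

lemma ins_succAbove (π : Perm (Fin (m + 1))) (p : Fin (m + 2)) (d : Fin (m + 1)) :
    ins π p (p.succAbove d) = (π d).castSucc := by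
  simp [ins, finSuccEquiv'_succAbove, finSuccEquiv'_symm_some, Fin.succAbove_last]

lemma ins_injective :
    Function.Injective (fun x : Perm (Fin (m + 1)) × Fin (m + 2) => ins x.1 x.2) := by
  rintro ⟨π₁, p₁⟩ ⟨π₂, p₂⟩ h
  have h' : ins π₁ p₁ = ins π₂ p₂ := h
  have hp : p₁ = p₂ := by
    have h1 : ins π₂ p₂ p₁ = Fin.last (m + 1) := by rw [← h']; exact ins_self _ _
    exact (ins π₂ p₂).injective (h1.trans (ins_self π₂ p₂).symm)
  subst hp
  have hπ : π₁ = π₂ := by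
    refine Equiv.ext fun d => ?_
    have h1 := ins_succAbove π₁ p₁ d
    rw [h', ins_succAbove] at h1
    exact Fin.castSucc_injective _ h1.symm
  rw [hπ]

lemma ins_bijective :
    Function.Bijective (fun x : Perm (Fin (m + 1)) × Fin (m + 2) => ins x.1 x.2) := by
  rw [Fintype.bijective_iff_injective_and_card]
  refine ⟨ins_injective, ?_⟩
  simp only [Fintype.card_prod, Fintype.card_perm, Fintype.card_fin, Nat.factorial_succ]
  ring

lemma descentCount_eq_sum {k : ℕ} (σ : Perm (Fin (k + 1))) :
    descentCount σ = ∑ i : Fin k, if σ i.succ < σ i.castSucc then 1 else 0 :=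
  Finset.card_filter _ _

lemma descentCount_ins_last (π : Perm (Fin (m + 1))) :
    descentCount (ins π (Fin.last (m + 1))) = descentCount π := by
  have hca : ∀ x : Fin (m + 1), ins π (Fin.last (m + 1)) x.castSucc = (π x).castSucc := by
    intro x
    have h := ins_succAbove π (Fin.last (m + 1)) x
    rwa [Fin.succAbove_last] at h
  rw [descentCount_eq_sum, descentCount_eq_sum, Fin.sum_univ_castSucc]
  have h0 : (if ins π (Fin.last (m + 1)) (Fin.last m).succ <
      ins π (Fin.last (m + 1)) (Fin.last m).castSucc then (1 : ℕ) else 0) = 0 := by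
    rw [Fin.succ_last, ins_self]
    exact if_neg (Fin.not_lt.mpr (Fin.le_last _))
  rw [h0, add_zero]
  refine Finset.sum_congr rfl fun d _ => ?_
  rw [Fin.succ_castSucc, hca, hca]
  simp [Fin.castSucc_lt_castSucc_iff]

lemma descentCount_ins_castSucc (π : Perm (Fin (m + 1))) (q : Fin (m + 1)) :
    descentCount (ins π q.castSucc) =
      1 + (Finset.univ.filter fun d : Fin m =>
        π d.succ < π d.castSucc ∧ d.succ ≠ q).card := by
  rw [descentCount_eq_sum, Fin.sum_univ_succAbove _ q, Finset.card_filter]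
  congr 1
  · -- the term at `i = q` is `1`
    have hq : ins π q.castSucc q.succ = (π q).castSucc := by
      rw [← Fin.succAbove_of_le_castSucc q.castSucc q le_rfl, ins_succAbove]
    rw [hq, ins_self]
    exact if_pos (Fin.castSucc_lt_last _)
  · refine Finset.sum_congr rfl fun d _ => ?_
    have hcs : ins π q.castSucc (q.succAbove d).castSucc = (π d.castSucc).castSucc := by
      rw [← Fin.castSucc_succAbove_castSucc, ins_succAbove]
    by_cases hdq : d.succ = q
    · -- the descent at the junction is destroyed
      have hlt : d.castSucc < q := hdq ▸ (Fin.castSucc_lt_succ : d.castSucc < d.succ)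
      have hiq : (q.succAbove d).succ = q.castSucc := by
        rw [Fin.succAbove_of_castSucc_lt _ _ hlt, Fin.succ_castSucc, hdq]
      rw [hiq, ins_self, hcs, if_neg (Fin.not_lt.mpr (Fin.le_last _)),
        if_neg (by simp [hdq])]
    · -- generic position
      have hsucc : (q.succAbove d).succ = q.castSucc.succAbove d.succ := by
        by_cases hlt : d.castSucc < q
        · have h1 : d.succ < q := by
            have hne : (d.succ : Fin (m + 1)).val ≠ q.val := fun h => hdq (Fin.ext h)
            have hlt' : d.castSucc.val < q.val := hlt
            have h4 : d.succ.val = d.val + 1 := Fin.val_succ d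
            have h5 : d.castSucc.val = d.val := Fin.coe_castSucc d
            rw [Fin.lt_def, h4]
            omega
          rw [Fin.succAbove_of_castSucc_lt _ _ hlt,
            Fin.succAbove_of_castSucc_lt _ _ (by rwa [Fin.castSucc_lt_castSucc_iff]),
            Fin.succ_castSucc]
        · have hle : q ≤ d.castSucc := Fin.not_lt.mp hlt
          rw [Fin.succAbove_of_le_castSucc _ _ hle,
            Fin.succAbove_of_le_castSucc _ _ (by
              rw [Fin.castSucc_le_castSucc_iff, Fin.le_def, Fin.val_succ]
              have h5 : q.val ≤ d.castSucc.val := hle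
              have h6 : d.castSucc.val = d.val := Fin.coe_castSucc d
              omega)]
    -- fallthrough below
      rw [hsucc, ins_succAbove, hcs]
      simp [Fin.castSucc_lt_castSucc_iff, hdq]

lemma descentCount_le (π : Perm (Fin (m + 1))) : descentCount π ≤ m :=
  (Finset.card_filter_le _ _).trans (by simp)

lemma descentCount_ins_castSucc' (π : Perm (Fin (m + 1))) (q : Fin (m + 1)) :
    descentCount (ins π q.castSucc) =
      if q ∈ (Finset.univ.filter fun d : Fin m =>
          π d.succ < π d.castSucc).image Fin.succ
      then descentCount π else descentCount π + 1 := by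
  rw [descentCount_ins_castSucc]
  by_cases hq : q ∈ (Finset.univ.filter fun d : Fin m =>
      π d.succ < π d.castSucc).image Fin.succ
  · rw [if_pos hq]
    obtain ⟨d₀, hd₀mem, hd₀⟩ := Finset.mem_image.mp hq
    have hset : (Finset.univ.filter fun d : Fin m =>
          π d.succ < π d.castSucc ∧ d.succ ≠ q)
        = (Finset.univ.filter fun d : Fin m => π d.succ < π d.castSucc).erase d₀ := by
      ext d
      simp only [Finset.mem_filter, Finset.mem_erase, Finset.mem_univ, true_and]
      constructor
      · rintro ⟨h1, h2⟩
        exact ⟨fun he => h2 (he ▸ hd₀), h1⟩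
      · rintro ⟨h2, h1⟩
        exact ⟨h1, fun he => h2 (Fin.succ_injective _ (he.trans hd₀.symm) ▸ rfl)⟩
    rw [hset, Finset.card_erase_of_mem hd₀mem]
    have hpos : 0 < (Finset.univ.filter fun d : Fin m =>
        π d.succ < π d.castSucc).card := Finset.card_pos.mpr ⟨d₀, hd₀mem⟩
    simp only [descentCount]
    omega
  · rw [if_neg hq]
    have hset : (Finset.univ.filter fun d : Fin m =>
          π d.succ < π d.castSucc ∧ d.succ ≠ q)
        = Finset.univ.filter fun d : Fin m => π d.succ < π d.castSucc := by
      ext d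
      simp only [Finset.mem_filter, Finset.mem_univ, true_and, and_iff_left_iff_imp]
      intro h1 h2
      exact hq (Finset.mem_image.mpr ⟨d, Finset.mem_filter.mpr ⟨Finset.mem_univ _, h1⟩, h2⟩)
    rw [hset]
    simp only [descentCount]
    omega

lemma sum_ins_pow (π : Perm (Fin (m + 1))) :
    ∑ p : Fin (m + 2), (X : ℚ[X]) ^ descentCount (ins π p) =
      (descentCount π + 1) • (X : ℚ[X]) ^ descentCount π
        + (m + 1 - descentCount π) • (X : ℚ[X]) ^ (descentCount π + 1) := by
  classical
  set T : Finset (Fin (m + 1)) := (Finset.univ.filter fun d : Fin m =>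
      π d.succ < π d.castSucc).image Fin.succ with hT
  have hTcard : T.card = descentCount π := by
    rw [hT, Finset.card_image_of_injective _ (Fin.succ_injective m)]
    rfl
  rw [Fin.sum_univ_castSucc]
  rw [descentCount_ins_last]
  have hterm : ∀ q : Fin (m + 1), (X : ℚ[X]) ^ descentCount (ins π q.castSucc)
      = if q ∈ T then (X : ℚ[X]) ^ descentCount π else X ^ (descentCount π + 1) := by
    intro q
    rw [descentCount_ins_castSucc', ← hT]
    split_ifs <;> rfl
  rw [Finset.sum_congr rfl fun q _ => hterm q, Finset.sum_ite,
    Finset.sum_const, Finset.sum_const]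
  have h1 : Finset.univ.filter (fun q : Fin (m + 1) => q ∈ T) = T := by
    ext q; simp
  have h2 : (Finset.univ.filter fun q : Fin (m + 1) => q ∉ T).card
      = (m + 1) - descentCount π := by
    rw [Finset.filter_not, Finset.card_sdiff_of_subset (Finset.filter_subset _ _)]
    have : filter (Membership.mem T) univ = T := by ext q; simp
    rw [this, hTcard, Finset.card_univ, Fintype.card_fin]
  rw [h1, hTcard, h2, succ_nsmul]
  abel

lemma eulerianPoly_succ (k : ℕ) :
    eulerianPoly (k + 1) = ∑ σ : Perm (Fin (k + 1)), (X : ℚ[X]) ^ descentCount σ := by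
  classical
  have hmap : ∀ σ : Perm (Fin (k + 1)), σ ∈ (Finset.univ : Finset (Perm (Fin (k + 1)))) →
      descentCount σ ∈ Finset.range (k + 1) := by
    intro σ _
    rw [Finset.mem_range]
    exact Nat.lt_succ_of_le (descentCount_le σ)
  rw [← Finset.sum_fiberwise_of_maps_to hmap (fun σ => (X : ℚ[X]) ^ descentCount σ)]
  show (∑ j ∈ Finset.range (k + 1), C ((eulerian (k + 1) j : ℚ)) * X ^ j) = _
  refine Finset.sum_congr rfl fun j _ => ?_
  have hc : ∀ σ ∈ Finset.univ.filter (fun σ : Perm (Fin (k + 1)) => descentCount σ = j),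
      (X : ℚ[X]) ^ descentCount σ = X ^ j := fun σ hσ => by
    rw [(Finset.mem_filter.mp hσ).2]
  rw [Finset.sum_congr rfl hc, Finset.sum_const]
  have he : eulerian (k + 1) j
      = (Finset.univ.filter fun σ : Perm (Fin (k + 1)) => descentCount σ = j).card := by
    simp only [eulerian]
    exact Fintype.card_subtype _
  rw [he]
  simp [nsmul_eq_mul, Polynomial.C_eq_natCast]

lemma alg_id (m D : ℕ) (hD : D ≤ m) :
    (D + 1) • (X : ℚ[X]) ^ D + (m + 1 - D) • (X : ℚ[X]) ^ (D + 1) =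
      X * (1 - X) * derivative ((X : ℚ[X]) ^ D) + (C ((m : ℚ) + 1) * X + 1) * X ^ D := by
  rw [derivative_X_pow, nsmul_eq_mul, nsmul_eq_mul,
    Nat.cast_sub (show D ≤ m + 1 by omega)]
  have hC : (C ((m : ℚ) + 1) : ℚ[X]) = (m : ℚ[X]) + 1 := by
    rw [map_add, Polynomial.C_1, Polynomial.C_eq_natCast]
  cases D with
  | zero => simp; ring
  | succ e =>
    have h1 : e + 1 - 1 = e := rfl
    rw [h1, hC]
    have hC2 : (C ((e + 1 : ℕ) : ℚ) : ℚ[X]) = (e : ℚ[X]) + 1 := by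
      rw [Polynomial.C_eq_natCast]
      push_cast
      ring
    rw [hC2]
    push_cast
    ring

end EulerianAux

open EulerianAux in
/-- Differential recursion for the Eulerian polynomials:
`A_{n+1}(t) = t(1-t)·A_n'(t) + (n·t + 1)·A_n(t)` in `ℚ[t]`. -/
theorem eulerianPoly_recursion (n : ℕ) :
    eulerianPoly (n + 1) =
      X * (1 - X) * derivative (eulerianPoly n) +
        (C (n : ℚ) * X + 1) * eulerianPoly n := by
  cases n with
  | zero =>
    rw [eulerianPoly_succ 0]
    have h : ∀ σ : Perm (Fin 1), descentCount σ = 0 := fun σ => by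
      simp [descentCount]
    rw [Finset.sum_congr rfl fun σ _ => by rw [h σ]]
    show ∑ _σ : Perm (Fin 1), ((X : ℚ[X]) ^ 0) = _
    rw [Finset.sum_const, Finset.card_univ]
    have hcard : Fintype.card (Perm (Fin 1)) = 1 := by simp
    rw [hcard]
    show (1 : ℕ) • ((X : ℚ[X]) ^ 0) = X * (1 - X) * derivative (eulerianPoly 0)
      + (C ((0 : ℕ) : ℚ) * X + 1) * eulerianPoly 0
    have h0 : eulerianPoly 0 = 1 := rfl
    rw [h0]
    simp
  | succ m =>
    calc eulerianPoly (m + 1 + 1)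
        = ∑ σ : Perm (Fin (m + 2)), (X : ℚ[X]) ^ descentCount σ := eulerianPoly_succ (m + 1)
      _ = ∑ x : Perm (Fin (m + 1)) × Fin (m + 2),
            (X : ℚ[X]) ^ descentCount (ins x.1 x.2) :=
          (Fintype.sum_bijective _ ins_bijective _ _ fun x => rfl).symm
      _ = ∑ π : Perm (Fin (m + 1)), ∑ p : Fin (m + 2),
            (X : ℚ[X]) ^ descentCount (ins π p) := by
          rw [Fintype.sum_prod_type]
      _ = ∑ π : Perm (Fin (m + 1)),
            ((descentCount π + 1) • (X : ℚ[X]) ^ descentCount π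
              + (m + 1 - descentCount π) • (X : ℚ[X]) ^ (descentCount π + 1)) :=
          Finset.sum_congr rfl fun π _ => sum_ins_pow π
      _ = ∑ π : Perm (Fin (m + 1)),
            (X * (1 - X) * derivative ((X : ℚ[X]) ^ descentCount π)
              + (C ((m : ℚ) + 1) * X + 1) * X ^ descentCount π) :=
          Finset.sum_congr rfl fun π _ => alg_id m _ (descentCount_le π)
      _ = X * (1 - X) * derivative (∑ π : Perm (Fin (m + 1)), (X : ℚ[X]) ^ descentCount π)
            + (C ((m : ℚ) + 1) * X + 1)
              * ∑ π : Perm (Fin (m + 1)), (X : ℚ[X]) ^ descentCount π := by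
          rw [Finset.sum_add_distrib, ← Finset.mul_sum, ← Finset.mul_sum, map_sum]
      _ = X * (1 - X) * derivative (eulerianPoly (m + 1))
            + (C (((m : ℕ) + 1 : ℕ) : ℚ) * X + 1) * eulerianPoly (m + 1) := by
          rw [← eulerianPoly_succ m]
          norm_num
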